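/- Let k ≥ 2, let χ be a k-horosphere in ℍ^{k+1} resting at a boundary point p, and let P be a geodesic k-plane in ℍ^{k+1}. Let ξ ∈ ∂P, let δ be the geodesic joining ξ and p, and let q = δ ∩ χ. Suppose the corresponding statement is known for k = 1 (horocycles and geodesics in ℍ²) with constant R₀ > 1: namely for R > R₀, d(horocycle, geodesic) < R − 1 implies d(intersection point, geodesic) < R. Then the same constant R₀ works for dimension k: for any R > R₀, if d(χ, P) < R − 1 then d(q, P) < R. -/

import Mathlib

/-!
In the hyperboloid model, take `x ∈ χ` and `y ∈ P` with `d(x, y) < R - 1`. The Busemann function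
of the ideal point `u` is `1`-Lipschitz, so `M = ⟨u, y⟩ / ⟨u, q⟩ < e^{R-1} ≤ sinh R`. Sliding `y`
inside `P` along the geodesic ray towards `ξ ∈ ∂P`, `cosh d(q, ·)` takes the form `K t + L / t`
with `K > 0`; since it is at least `1`, its minimum `2 √(K L)` is attained, and the relation
`q ∈ span {ξ, u}` gives `4 K L ≤ 1 + M² < cosh² R`.
-/

/-- The Minkowski form of signature `(m, 1)` on `ℝ^{m+1}`. -/
def mf (m : ℕ) (x y : Fin (m + 1) → ℝ) : ℝ :=
  -(x 0 * y 0) + ∑ i : Fin m, x i.succ * y i.succ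

/-- The hyperboloid model of `ℍ^m`. -/
def Hyp (m : ℕ) : Set (Fin (m + 1) → ℝ) := {x | mf m x x = -1 ∧ 0 < x 0}

/-- Inverse hyperbolic cosine. -/
noncomputable def acosh (x : ℝ) : ℝ := Real.log (x + Real.sqrt (x ^ 2 - 1))

/-- The hyperbolic distance in the hyperboloid model: `d(x,y) = arcosh(-⟨x,y⟩)`. -/
noncomputable def hdist (m : ℕ) (x y : Fin (m + 1) → ℝ) : ℝ := acosh (-(mf m x y))

/-- The distance between two subsets of the hyperboloid. -/
noncomputable def setDist (m : ℕ) (S T : Set (Fin (m + 1) → ℝ)) : ℝ :=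
  sInf {r | ∃ x ∈ S, ∃ y ∈ T, r = hdist m x y}

open Real

lemma exp_sub_one_le_sinh {R : ℝ} (hR : 1 ≤ R) : exp (R - 1) ≤ sinh R := by
  have he := exp_one_gt_d9
  have hX : exp 1 ≤ exp R := exp_le_exp.2 hR
  rw [sinh_eq, exp_sub, exp_neg, div_le_div_iff₀ (exp_pos 1) two_pos]
  have hXpos := exp_pos R
  field_simp
  nlinarith [mul_le_mul hX hX (exp_pos 1).le hXpos.le]

lemma exists_pos_sq_add_mul_inv_eq {K L : ℝ} (hK : 0 < K)
    (h : ∀ t > 0, 1 ≤ K * t + L * t⁻¹) : ∃ t > 0, (K * t + L * t⁻¹) ^ 2 = 4 * K * L := by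
  have hL : 0 < L := by
    have := h (2 * K)⁻¹ (by positivity)
    field_simp at this
    nlinarith
  refine ⟨√(L / K), by positivity, ?_⟩
  have hsq : √(L / K) ^ 2 = L / K := sq_sqrt (by positivity)
  field_simp
  rw [hsq]
  field_simp
  ring

section Minkowski

variable {m : ℕ}

lemma mf_comm (x y : Fin (m + 1) → ℝ) : mf m x y = mf m y x := by
  simp only [mf, mul_comm]

lemma mf_add_left (x y z : Fin (m + 1) → ℝ) : mf m (x + y) z = mf m x z + mf m y z := by
  simp only [mf, Pi.add_apply, add_mul, Finset.sum_add_distrib]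
  ring

lemma mf_smul_left (a : ℝ) (x z : Fin (m + 1) → ℝ) : mf m (a • x) z = a * mf m x z := by
  simp only [mf, Pi.smul_apply, smul_eq_mul, mul_assoc, ← Finset.mul_sum]
  ring

lemma mf_neg_left (x z : Fin (m + 1) → ℝ) : mf m (-x) z = -mf m x z := by
  rw [← neg_one_smul ℝ x, mf_smul_left, neg_one_mul]

lemma mf_sub_left (x y z : Fin (m + 1) → ℝ) : mf m (x - y) z = mf m x z - mf m y z := by
  rw [sub_eq_add_neg, ← neg_one_smul ℝ y, mf_add_left, mf_smul_left]
  ring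

lemma mf_add_right (x y z : Fin (m + 1) → ℝ) : mf m x (y + z) = mf m x y + mf m x z := by
  rw [mf_comm, mf_add_left, mf_comm y, mf_comm z]

lemma mf_smul_right (a : ℝ) (x y : Fin (m + 1) → ℝ) : mf m x (a • y) = a * mf m x y := by
  rw [mf_comm, mf_smul_left, mf_comm y]

lemma mf_neg_right (x y : Fin (m + 1) → ℝ) : mf m x (-y) = -mf m x y := by
  rw [mf_comm, mf_neg_left, mf_comm y]

lemma mf_sub_right (x y z : Fin (m + 1) → ℝ) : mf m x (y - z) = mf m x y - mf m x z := by
  rw [mf_comm, mf_sub_left, mf_comm y, mf_comm z]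

def spatial (x : Fin (m + 1) → ℝ) : EuclideanSpace ℝ (Fin m) := WithLp.toLp 2 fun i => x i.succ

lemma mf_eq_inner (x y : Fin (m + 1) → ℝ) :
    mf m x y = -(x 0 * y 0) + inner ℝ (spatial x) (spatial y) := by
  simp [mf, spatial, PiLp.inner_apply, mul_comm]

lemma mf_self (x : Fin (m + 1) → ℝ) : mf m x x = ‖spatial x‖ ^ 2 - x 0 ^ 2 := by
  rw [mf_eq_inner, real_inner_self_eq_norm_sq]
  ring

lemma norm_spatial_le_abs {x : Fin (m + 1) → ℝ} (hx : mf m x x ≤ 0) : ‖spatial x‖ ≤ |x 0| := by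
  rw [mf_self, sub_nonpos, ← sq_abs (x 0)] at hx
  exact (pow_le_pow_iff_left₀ (norm_nonneg _) (abs_nonneg _) two_ne_zero).1 hx

lemma norm_spatial_lt_abs {x : Fin (m + 1) → ℝ} (hx : mf m x x < 0) : ‖spatial x‖ < |x 0| := by
  rw [mf_self, sub_neg, ← sq_abs (x 0)] at hx
  exact (pow_lt_pow_iff_left₀ (norm_nonneg _) (abs_nonneg _) two_ne_zero).1 hx

lemma mf_neg_of_causal {x y : Fin (m + 1) → ℝ} (hx : mf m x x ≤ 0) (hx0 : 0 < x 0)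
    (hy : mf m y y < 0) (hy0 : 0 < y 0) : mf m x y < 0 := by
  have hxs := norm_spatial_le_abs hx
  have hys := norm_spatial_lt_abs hy
  rw [abs_of_pos hx0] at hxs
  rw [abs_of_pos hy0] at hys
  have := real_inner_le_norm (spatial x) (spatial y)
  rw [mf_eq_inner]
  nlinarith [norm_nonneg (spatial x), norm_nonneg (spatial y)]

lemma mf_neg_of_mem_hyp {x y : Fin (m + 1) → ℝ} (hx : mf m x x ≤ 0) (hx0 : 0 < x 0)
    (hy : y ∈ Hyp m) : mf m x y < 0 :=
  mf_neg_of_causal hx hx0 (by rw [hy.1]; norm_num) hy.2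

lemma mf_self_nonneg_of_mf_eq_zero {v y : Fin (m + 1) → ℝ} (hy : mf m y y ≤ 0) (hy0 : y 0 ≠ 0)
    (hvy : mf m v y = 0) : 0 ≤ mf m v v := by
  have hys := norm_spatial_le_abs hy
  have hcs := abs_real_inner_le_norm (spatial v) (spatial y)
  rw [mf_eq_inner, neg_add_eq_zero] at hvy
  rw [← hvy, abs_mul] at hcs
  have hv : |v 0| ≤ ‖spatial v‖ :=
    le_of_mul_le_mul_right (hcs.trans (by gcongr)) (abs_pos.2 hy0)
  rw [mf_self, sub_nonneg, ← sq_abs (v 0)]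
  gcongr

lemma apply_zero_pos_of_mf_neg {v y : Fin (m + 1) → ℝ} (hv : mf m v v < 0) (hy : mf m y y < 0)
    (hy0 : 0 < y 0) (hvy : mf m v y < 0) : 0 < v 0 := by
  rcases lt_trichotomy (v 0) 0 with hneg | hzero | hpos
  · have hv' : mf m (-v) (-v) ≤ 0 := by rw [mf_neg_left, mf_neg_right, neg_neg]; exact hv.le
    have := mf_neg_of_causal hv' (by simpa using hneg) hy hy0
    rw [mf_neg_left] at this
    linarith
  · have := norm_spatial_lt_abs hv
    rw [hzero, abs_zero] at this
    exact absurd this (not_lt.2 (norm_nonneg _))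
  · exact hpos

lemma one_le_neg_mf {x y : Fin (m + 1) → ℝ} (hx : x ∈ Hyp m) (hy : y ∈ Hyp m) : 1 ≤ -mf m x y := by
  obtain ⟨hxx, hx0⟩ := hx
  obtain ⟨hyy, hy0⟩ := hy
  rw [mf_self] at hxx hyy
  have := real_inner_le_norm (spatial x) (spatial y)
  have hprod : (1 + ‖spatial x‖ * ‖spatial y‖) ^ 2 ≤ (x 0 * y 0) ^ 2 := by
    nlinarith [sq_nonneg (‖spatial x‖ - ‖spatial y‖)]
  have := abs_le_of_sq_le_sq' hprod (by positivity)
  rw [mf_eq_inner]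
  linarith

end Minkowski

section Distance

variable {m : ℕ}

lemma hdist_eq_arcosh (x y : Fin (m + 1) → ℝ) : hdist m x y = arcosh (-mf m x y) := rfl

lemma hdist_nonneg {x y : Fin (m + 1) → ℝ} (hx : x ∈ Hyp m) (hy : y ∈ Hyp m) :
    0 ≤ hdist m x y :=
  arcosh_nonneg (one_le_neg_mf hx hy)

lemma hdist_lt_iff {x y : Fin (m + 1) → ℝ} (hx : x ∈ Hyp m) (hy : y ∈ Hyp m) {R : ℝ}
    (hR : 0 ≤ R) : hdist m x y < R ↔ -mf m x y < cosh R := by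
  have hxy := one_le_neg_mf hx hy
  rw [hdist_eq_arcosh, ← arcosh_lt_arcosh (by linarith) (cosh_pos R), arcosh_cosh hR]

lemma bddBelow_hdist {S T : Set (Fin (m + 1) → ℝ)} (hS : S ⊆ Hyp m) (hT : T ⊆ Hyp m) :
    BddBelow {r | ∃ x ∈ S, ∃ y ∈ T, r = hdist m x y} := by
  refine ⟨0, ?_⟩
  rintro _ ⟨x, hx, y, hy, rfl⟩
  exact hdist_nonneg (hS hx) (hT hy)

lemma setDist_le_hdist {S T : Set (Fin (m + 1) → ℝ)} (hS : S ⊆ Hyp m) (hT : T ⊆ Hyp m)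
    {x y : Fin (m + 1) → ℝ} (hx : x ∈ S) (hy : y ∈ T) : setDist m S T ≤ hdist m x y :=
  csInf_le (bddBelow_hdist hS hT) ⟨x, hx, y, hy, rfl⟩

lemma exists_hdist_lt_of_setDist_lt {S T : Set (Fin (m + 1) → ℝ)} {r : ℝ}
    (h : setDist m S T < r) (hS : S ⊆ Hyp m) (hT : T ⊆ Hyp m) (hSne : S.Nonempty)
    (hTne : T.Nonempty) :
    ∃ x ∈ S, ∃ y ∈ T, hdist m x y < r := by
  obtain ⟨x, hx⟩ := hSne
  obtain ⟨y, hy⟩ := hTne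
  obtain ⟨_, ⟨x, hx, y, hy, rfl⟩, hlt⟩ :=
    (csInf_lt_iff (bddBelow_hdist hS hT) ⟨_, x, hx, y, hy, rfl⟩).1 h
  exact ⟨x, hx, y, hy, hlt⟩

/-- The Busemann function `log (-⟨·, u⟩)` of the ideal point `[u]` is `1`-Lipschitz. -/
lemma div_le_exp_hdist {u x y : Fin (m + 1) → ℝ} (hu : mf m u u = 0) (hu0 : 0 < u 0)
    (hx : x ∈ Hyp m) (hy : y ∈ Hyp m) : mf m u y / mf m u x ≤ exp (hdist m x y) := by
  set z := -mf m x y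
  have hz := one_le_neg_mf hx hy
  have hux := mf_neg_of_mem_hyp hu.le hu0 hx
  set M := mf m u y / mf m u x
  -- `v` is orthogonal to the null vector `u`, hence not timelike
  set v := mf m u x • y - mf m u y • x
  have hvu : mf m v u = 0 := by
    simp only [v, mf_sub_left, mf_smul_left, mf_comm y u, mf_comm x u]
    ring
  have hvv := mf_self_nonneg_of_mf_eq_zero hu.le hu0.ne' hvu
  simp only [v, mf_sub_left, mf_sub_right, mf_smul_left, mf_smul_right, hx.1, hy.1,
    mf_comm y x] at hvv
  have hM : M ^ 2 + 1 ≤ 2 * M * z := by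
    have hyx : mf m u y = M * mf m u x := (div_mul_cancel₀ _ hux.ne).symm
    rw [hyx] at hvv
    have hsq : 0 < mf m u x ^ 2 := sq_pos_of_neg hux
    nlinarith
  have hsqrt : M - z ≤ √(z ^ 2 - 1) := (le_abs_self _).trans (Real.abs_le_sqrt (by nlinarith))
  rw [hdist_eq_arcosh, exp_arcosh hz]
  linarith

end Distance

section Geodesic

variable {m : ℕ}

/-- The point of the geodesic from `y` towards the ideal point `[w]` at distance `|log t|`
from `y`. -/
noncomputable def geodesicToIdeal (y w : Fin (m + 1) → ℝ) (t : ℝ) : Fin (m + 1) → ℝ :=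
  t⁻¹ • y + ((t - t⁻¹) / (-2 * mf m w y)) • w

variable {y w : Fin (m + 1) → ℝ}

lemma mf_geodesicToIdeal_self (hy : mf m y y = -1) (hw : mf m w w = 0) (hwy : mf m w y ≠ 0)
    {t : ℝ} (ht : t ≠ 0) : mf m (geodesicToIdeal y w t) (geodesicToIdeal y w t) = -1 := by
  simp only [geodesicToIdeal, mf_add_left, mf_add_right, mf_smul_left, mf_smul_right, hy, hw,
    mf_comm y w]
  field_simp
  ring

lemma mf_geodesicToIdeal_left (hy : mf m y y = -1) (hwy : mf m w y ≠ 0) {t : ℝ} (ht : t ≠ 0) :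
    mf m (geodesicToIdeal y w t) y = -(t + t⁻¹) / 2 := by
  simp only [geodesicToIdeal, mf_add_left, mf_smul_left, hy]
  field_simp
  ring

lemma geodesicToIdeal_mem_hyp (hy : y ∈ Hyp m) (hw : mf m w w = 0) (hw0 : 0 < w 0) {t : ℝ}
    (ht : 0 < t) : geodesicToIdeal y w t ∈ Hyp m := by
  have hwy := mf_neg_of_mem_hyp hw.le hw0 hy
  have hself := mf_geodesicToIdeal_self hy.1 hw hwy.ne ht.ne'
  refine ⟨hself, apply_zero_pos_of_mf_neg (by rw [hself]; norm_num) (by rw [hy.1]; norm_num)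
    hy.2 ?_⟩
  rw [mf_geodesicToIdeal_left hy.1 hwy.ne ht.ne']
  have : 0 < t + t⁻¹ := by positivity
  linarith

lemma neg_mf_geodesicToIdeal (q : Fin (m + 1) → ℝ) (hwy : mf m w y ≠ 0) {t : ℝ} (ht : t ≠ 0) :
    -mf m q (geodesicToIdeal y w t) =
      mf m q w / (2 * mf m w y) * t + (-mf m q y - mf m q w / (2 * mf m w y)) * t⁻¹ := by
  simp only [geodesicToIdeal, mf_add_right, mf_smul_right]
  field_simp
  ring

end Geodesic

section Estimate

variable {m : ℕ} {u w q : Fin (m + 1) → ℝ}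

lemma mf_ne_zero_of_mem_span_pair (hu : mf m u u = 0) (huq : mf m u q ≠ 0)
    (hq : q ∈ Submodule.span ℝ {w, u}) : mf m u w ≠ 0 := by
  obtain ⟨a, b, rfl⟩ := Submodule.mem_span_pair.1 hq
  intro huw
  simp [mf_add_right, mf_smul_right, hu, huw] at huq

lemma eq_of_mem_span_pair (hu : mf m u u = 0) (hw : mf m w w = 0) (hqq : mf m q q = -1)
    (huw : mf m u w ≠ 0) (hq : q ∈ Submodule.span ℝ {w, u}) :
    q = (mf m u q / mf m u w) • w - (2 * mf m u q)⁻¹ • u := by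
  obtain ⟨a, b, rfl⟩ := Submodule.mem_span_pair.1 hq
  have hua : mf m u (a • w + b • u) = a * mf m u w := by
    simp only [mf_add_right, mf_smul_right, hu]
    ring
  simp only [mf_add_left, mf_add_right, mf_smul_left, mf_smul_right, hu, hw, mf_comm w u,
    mul_zero, zero_add, add_zero] at hqq
  have hb : b = -(2 * (a * mf m u w))⁻¹ := by
    have ha : a ≠ 0 := by rintro rfl; simp at hqq
    field_simp
    linarith
  rw [hua, mul_div_cancel_right₀ _ huw, hb, neg_smul, ← sub_eq_add_neg]

lemma exists_sq_mf_geodesicToIdeal_le (hu : mf m u u = 0) (hu0 : 0 < u 0) (hw : mf m w w = 0)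
    (hw0 : 0 < w 0) (hq : q ∈ Hyp m) (hqspan : q ∈ Submodule.span ℝ {w, u})
    {y : Fin (m + 1) → ℝ} (hy : y ∈ Hyp m) :
    ∃ t > 0, mf m q (geodesicToIdeal y w t) ^ 2 ≤ 1 + (mf m u y / mf m u q) ^ 2 := by
  have huq := mf_neg_of_mem_hyp hu.le hu0 hq
  have hwy := mf_neg_of_mem_hyp hw.le hw0 hy
  have hwq := mf_neg_of_mem_hyp hw.le hw0 hq
  have huw := mf_ne_zero_of_mem_span_pair hu huq.ne hqspan
  set K := mf m q w / (2 * mf m w y)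
  set M := mf m u y / mf m u q
  have hK : 0 < K := div_pos_of_neg_of_neg (by rwa [mf_comm]) (by linarith)
  obtain ⟨t, ht, hKL⟩ := exists_pos_sq_add_mul_inv_eq hK fun t ht => by
    rw [← neg_mf_geodesicToIdeal q hwy.ne ht.ne']
    exact one_le_neg_mf hq (geodesicToIdeal_mem_hyp hy hw hw0 ht)
  refine ⟨t, ht, ?_⟩
  have hqdec := eq_of_mem_span_pair hu hw hq.1 huw hqspan
  have hqw : mf m q w = -mf m u w / (2 * mf m u q) := by
    conv_lhs => rw [hqdec]
    simp only [mf_sub_left, mf_smul_left, hw]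
    ring
  have hqy : mf m q y = mf m u q / mf m u w * mf m w y - mf m u y / (2 * mf m u q) := by
    conv_lhs => rw [hqdec]
    simp only [mf_sub_left, mf_smul_left]
    ring
  have hKqy : 4 * K * mf m q y = -1 - 2 * K * M := by
    simp only [K, M, hqw, hqy]
    field_simp [huq.ne, hwy.ne]
    ring
  rw [← neg_sq, neg_mf_geodesicToIdeal q hwy.ne ht.ne', hKL]
  -- `4 K L = 1 + 2 K M - 4 K² = 1 + M² - (M - K)² - 3 K²`
  nlinarith [sq_nonneg (M - K)]

end Estimate

/-- The horosphere `χ` rests at the future null direction `u` (it is the level set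
`⟨x,u⟩ = -c`), the geodesic `k`-plane `P` is cut out by a `(k+1)`-dimensional linear subspace
`W`, `ξ` is a null direction `w` in `W`, and `q` is the intersection of the geodesic joining `ξ`
and `u` (i.e. `Hyp ∩ span{w,u}`) with `χ`. -/
theorem horosphere_plane_distance_reduction_general (k : ℕ)
    (R₀ : ℝ) (hR₀ : 1 < R₀) :
    ∀ R : ℝ, R₀ < R → ∀ (u w q : Fin (k + 2) → ℝ) (c : ℝ)
        (W : Submodule ℝ (Fin (k + 2) → ℝ)),
        0 < c → mf (k + 1) u u = 0 → u ≠ 0 → 0 < u 0 →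
        Module.finrank ℝ W = k + 1 →
        (Hyp (k + 1) ∩ (W : Set (Fin (k + 2) → ℝ))).Nonempty →
        w ∈ W → mf (k + 1) w w = 0 → w ≠ 0 → 0 < w 0 → (¬ ∃ t : ℝ, u = t • w) →
        q ∈ Hyp (k + 1) → q ∈ (Submodule.span ℝ {w, u} : Set (Fin (k + 2) → ℝ)) →
        mf (k + 1) q u = -c →
        setDist (k + 1) {x | x ∈ Hyp (k + 1) ∧ mf (k + 1) x u = -c}
            (Hyp (k + 1) ∩ (W : Set (Fin (k + 2) → ℝ))) < R - 1 →
        setDist (k + 1) {q} (Hyp (k + 1) ∩ (W : Set (Fin (k + 2) → ℝ))) < R := by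
  intro R hR u w q c W _ hu _ hu0 _ hPne hwW hw _ hw0 _ hq hqspan hqu hχP
  have hR1 : 1 < R := hR₀.trans hR
  obtain ⟨x, ⟨hx, hxu⟩, y, ⟨hy, hyW⟩, hxy⟩ :=
    exists_hdist_lt_of_setDist_lt hχP (fun _ h => h.1) Set.inter_subset_left ⟨q, hq, hqu⟩ hPne
  have hM : mf (k + 1) u y / mf (k + 1) u q < sinh R := calc
    _ = mf (k + 1) u y / mf (k + 1) u x := by rw [mf_comm u x, mf_comm u q, hxu, hqu]
    _ ≤ exp (hdist (k + 1) x y) := div_le_exp_hdist hu hu0 hx hy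
    _ < exp (R - 1) := exp_lt_exp.2 hxy
    _ ≤ sinh R := exp_sub_one_le_sinh hR1.le
  have hM0 : 0 < mf (k + 1) u y / mf (k + 1) u q :=
    div_pos_of_neg_of_neg (mf_neg_of_mem_hyp hu.le hu0 hy) (mf_neg_of_mem_hyp hu.le hu0 hq)
  obtain ⟨t, ht, hqy'⟩ := exists_sq_mf_geodesicToIdeal_le hu hu0 hw hw0 hq hqspan hy
  have hy' : geodesicToIdeal y w t ∈ Hyp (k + 1) ∩ W :=
    ⟨geodesicToIdeal_mem_hyp hy hw hw0 ht, W.add_mem (W.smul_mem _ hyW) (W.smul_mem _ hwW)⟩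
  refine (setDist_le_hdist (Set.singleton_subset_iff.2 hq) Set.inter_subset_left
    (Set.mem_singleton q) hy').trans_lt ?_
  rw [hdist_lt_iff hq hy'.1 (by linarith)]
  have hsq : mf (k + 1) q (geodesicToIdeal y w t) ^ 2 < cosh R ^ 2 := by
    rw [cosh_sq']
    nlinarith
  exact neg_lt.2 (abs_lt_of_sq_lt_sq' hsq (cosh_pos R).le).1

/-- Reduction of the horosphere/geodesic-plane distance estimate from `ℍ²` to
`ℍ^{k+1}`: the horosphere `χ` rests at the future null direction `u` (it is the level
set `⟨x,u⟩ = -c`), the geodesic `k`-plane `P` is cut out by a `(k+1)`-dimensional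
linear subspace `W`, `ξ` is a null direction `w` in `W`, and `q` is the intersection
of the geodesic joining `ξ` and `u` (i.e. `Hyp ∩ span{w,u}`) with `χ`. Assuming the
estimate for `k = 1` with constant `R₀`, the same constant works in dimension
`k ≥ 2`. -/
theorem horosphere_plane_distance_reduction (k : ℕ) (hk : 2 ≤ k)
    (R₀ : ℝ) (hR₀ : 1 < R₀)
    (hbase : ∀ R : ℝ, R₀ < R → ∀ (u w q : Fin 3 → ℝ) (c : ℝ)
        (W : Submodule ℝ (Fin 3 → ℝ)),
        0 < c → mf 2 u u = 0 → u ≠ 0 → 0 < u 0 →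
        Module.finrank ℝ W = 2 → (Hyp 2 ∩ (W : Set (Fin 3 → ℝ))).Nonempty →
        w ∈ W → mf 2 w w = 0 → w ≠ 0 → 0 < w 0 → (¬ ∃ t : ℝ, u = t • w) →
        q ∈ Hyp 2 → q ∈ (Submodule.span ℝ {w, u} : Set (Fin 3 → ℝ)) →
        mf 2 q u = -c →
        setDist 2 {x | x ∈ Hyp 2 ∧ mf 2 x u = -c} (Hyp 2 ∩ (W : Set (Fin 3 → ℝ)))
          < R - 1 →
        setDist 2 {q} (Hyp 2 ∩ (W : Set (Fin 3 → ℝ))) < R) :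
    ∀ R : ℝ, R₀ < R → ∀ (u w q : Fin (k + 2) → ℝ) (c : ℝ)
        (W : Submodule ℝ (Fin (k + 2) → ℝ)),
        0 < c → mf (k + 1) u u = 0 → u ≠ 0 → 0 < u 0 →
        Module.finrank ℝ W = k + 1 →
        (Hyp (k + 1) ∩ (W : Set (Fin (k + 2) → ℝ))).Nonempty →
        w ∈ W → mf (k + 1) w w = 0 → w ≠ 0 → 0 < w 0 → (¬ ∃ t : ℝ, u = t • w) →
        q ∈ Hyp (k + 1) → q ∈ (Submodule.span ℝ {w, u} : Set (Fin (k + 2) → ℝ)) →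
        mf (k + 1) q u = -c →
        setDist (k + 1) {x | x ∈ Hyp (k + 1) ∧ mf (k + 1) x u = -c}
            (Hyp (k + 1) ∩ (W : Set (Fin (k + 2) → ℝ))) < R - 1 →
        setDist (k + 1) {q} (Hyp (k + 1) ∩ (W : Set (Fin (k + 2) → ℝ))) < R :=
  horosphere_plane_distance_reduction_general k R₀ hR₀
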